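/- arXiv:2011.09597 — 5 statements merged into one kernel-verified Lean document; each statement's English description precedes it below -/
import Mathlib

section
/- Let R be a principal ideal domain and Λ a free R-module of rank 2m equipped with a non-degenerate alternating bilinear form with values in R. Then Λ admits a para-symplectic basis, i.e. a basis e_1,…,e_m,f_1,…,f_m with ⟨e_i,e_j⟩ = ⟨f_i,f_j⟩ = 0 and ⟨e_i,f_j⟩ = d_i δ_{ij} for some nonzero d_i ∈ R, which can moreover be ordered so that d_i divides d_{i+1} for all i < m. -/
/-!
Pick `e, f` such that `B e f` is minimal for divisibility among the nonzero values of `B`, which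
is possible since a principal ideal domain has no infinite chains of strict divisors. For any
value `c` that can be combined with `B e f` into arbitrary values `α * B e f + β * c`, the
Bézout gcd of `B e f` and `c` is again a value, so minimality gives `B e f ∣ c`. This shows first
that `B e f` divides every `B e z` and `B f z`, so that `M` is the direct sum of `span {e, f}`
and its orthogonal `W`, on which `B` is still alternating and non-degenerate; and then that
`B e f` divides every value of `B` on `W`. Induction on `W` finishes the proof, with `e, f` put
in front since `B e f` divides all the later `d i`.
-/

open Module Submodule

theorem Set.range_sum_elim_unit {α : Type*} (a b : α) :
    Set.range (Sum.elim (fun _ : Unit => a) fun _ : Unit => b) = {a, b} := by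
  rw [Set.Sum.elim_range, Set.range_const, Set.range_const, Set.singleton_union]

theorem Submodule.finrank_add_finrank_of_isCompl {R M : Type*} [Ring R] [StrongRankCondition R]
    [AddCommGroup M] [Module R M] {p q : Submodule R M} [Free R p] [Free R q] [Module.Finite R p]
    [Module.Finite R q] (h : IsCompl p q) : finrank R p + finrank R q = finrank R M :=
  finrank_prod.symm.trans (prodEquivOfIsCompl p q h).finrank_eq

namespace LinearMap.BilinForm

variable {R M : Type*} [CommRing R] [AddCommGroup M] [Module R M] {B : LinearMap.BilinForm R M}

-- `v (.inl i)` and `v (.inr i)` are the vectors `e_i` and `f_i` of a para-symplectic basis.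
def IsOrderedParaSymplectic {m : ℕ} (B : LinearMap.BilinForm R M) (v : Fin m ⊕ Fin m → M)
    (d : Fin m → R) : Prop :=
  (∀ i, d i ≠ 0) ∧
  (∀ i j, B (v (Sum.inl i)) (v (Sum.inl j)) = 0) ∧
  (∀ i j, B (v (Sum.inr i)) (v (Sum.inr j)) = 0) ∧
  (∀ i j, B (v (Sum.inl i)) (v (Sum.inr j)) = if i = j then d i else 0) ∧
  (∀ i j : Fin m, i ≤ j → d i ∣ d j)

theorem mem_orthogonal_span_pair {e f z : M} :
    z ∈ B.orthogonal (span R {e, f}) ↔ B e z = 0 ∧ B f z = 0 := by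
  rw [mem_orthogonal_iff]
  refine ⟨fun h => ⟨h e (subset_span (by simp)), h f (subset_span (by simp))⟩, ?_⟩
  rintro ⟨he, hf⟩ x hx
  obtain ⟨s, t, rfl⟩ := mem_span_pair.mp hx
  simp [he, hf]

theorem separatingLeft_restrict_of_isCompl (hB : B.SeparatingLeft) {p q : Submodule R M}
    (hpq : IsCompl p q) (hpq_ortho : ∀ x ∈ p, ∀ y ∈ q, B x y = 0) :
    (B.restrict p).SeparatingLeft := by
  rw [LinearMap.separatingLeft_iff_ker_eq_bot] at hB ⊢
  rw [ker_restrict_eq_of_codisjoint hpq.codisjoint hpq_ortho, hB, comap_bot, ker_subtype]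

section NoZeroDivisors

variable [NoZeroDivisors R] {e f : M}

theorem eq_zero_of_apply_smul_add_smul_eq_zero (hB : B.IsAlt) (hef : B e f ≠ 0) {s t : R}
    (he : B e (s • e + t • f) = 0) (hf : B f (s • e + t • f) = 0) : s = 0 ∧ t = 0 := by
  simp only [map_add, map_smul, smul_eq_mul, hB.self_eq_zero, ← hB.neg_eq e f] at he hf
  simp_all

theorem linearIndependent_pair (hB : B.IsAlt) (hef : B e f ≠ 0) :
    LinearIndependent R (Sum.elim (fun _ : Unit => e) (fun _ : Unit => f)) := by
  rw [Fintype.linearIndependent_iff]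
  intro g hg
  simp only [Fintype.sum_sum_type, Fintype.sum_unique, Sum.elim_inl, Sum.elim_inr] at hg
  obtain ⟨hs, ht⟩ := eq_zero_of_apply_smul_add_smul_eq_zero hB hef (s := g (.inl default))
    (t := g (.inr default)) (by rw [hg, map_zero]) (by rw [hg, map_zero])
  rintro (⟨⟩ | ⟨⟩) <;> assumption

theorem isCompl_orthogonal_span_pair (hB : B.IsAlt) (hef : B e f ≠ 0)
    (he : ∀ z, B e f ∣ B e z) (hf : ∀ z, B e f ∣ B f z) :
    IsCompl (B.orthogonal (span R {e, f})) (span R {e, f}) := by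
  constructor
  · rw [disjoint_def]
    intro x hx hx'
    obtain ⟨s, t, rfl⟩ := mem_span_pair.mp hx'
    obtain ⟨hxe, hxf⟩ := mem_orthogonal_span_pair.mp hx
    obtain ⟨rfl, rfl⟩ := eq_zero_of_apply_smul_add_smul_eq_zero hB hef hxe hxf
    simp
  · rw [codisjoint_iff_exists_add_eq]
    intro z
    obtain ⟨a, ha⟩ := he z
    obtain ⟨b, hb⟩ := hf z
    refine ⟨z - a • f + b • e, a • f - b • e, mem_orthogonal_span_pair.mpr ⟨?_, ?_⟩,
      sub_mem (smul_mem _ _ (subset_span (by simp))) (smul_mem _ _ (subset_span (by simp))),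
      by abel⟩
    · simp only [map_add, map_sub, map_smul, smul_eq_mul, hB.self_eq_zero, ha]
      ring
    · simp only [map_add, map_sub, map_smul, smul_eq_mul, hB.self_eq_zero, hb, ← hB.neg_eq e f]
      ring

theorem finrank_span_pair [Nontrivial R] (hB : B.IsAlt) (hef : B e f ≠ 0) :
    finrank R (span R {e, f}) = 2 := by
  rw [← Set.range_sum_elim_unit, finrank_span_eq_card (linearIndependent_pair hB hef)]
  rfl

end NoZeroDivisors

def IsDvdMinimalValue (B : LinearMap.BilinForm R M) (e f : M) : Prop :=
  ∀ x y, B x y ∣ B e f → B e f ∣ B x y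

theorem exists_isDvdMinimalValue [IsDomain R] [WfDvdMonoid R] (h : ∃ x y, B x y ≠ 0) :
    ∃ e f, B e f ≠ 0 ∧ B.IsDvdMinimalValue e f := by
  obtain ⟨x, y, hxy⟩ := h
  obtain ⟨_, ⟨hne, e, f, rfl⟩, hmin⟩ := wellFounded_dvdNotUnit.has_min
    {c : R | c ≠ 0 ∧ ∃ x y, B x y = c} ⟨_, hxy, x, y, rfl⟩
  refine ⟨e, f, hne, fun x y hdvd => not_not.mp fun hndvd => ?_⟩
  exact hmin _ ⟨ne_zero_of_dvd_ne_zero hne hdvd, x, y, rfl⟩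
    (dvd_and_not_dvd_iff.mp ⟨hdvd, hndvd⟩)

namespace IsDvdMinimalValue

variable [IsBezout R] {e f : M}

theorem dvd_of_forall_exists_apply_eq (hmin : B.IsDvdMinimalValue e f) {c : R}
    (hc : ∀ α β : R, ∃ x y, B x y = α * B e f + β * c) : B e f ∣ c := by
  obtain ⟨α, β, hαβ⟩ := IsBezout.gcd_eq_sum (B e f) c
  obtain ⟨x, y, hxy⟩ := hc α β
  rw [hαβ] at hxy
  exact (hmin x y (hxy ▸ IsBezout.gcd_dvd_left _ _)).trans (hxy ▸ IsBezout.gcd_dvd_right _ _)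

theorem dvd_apply_left (hmin : B.IsDvdMinimalValue e f) (z : M) : B e f ∣ B e z :=
  hmin.dvd_of_forall_exists_apply_eq fun α β => ⟨e, α • f + β • z, by simp⟩

theorem dvd_apply_right (hmin : B.IsDvdMinimalValue e f) (hB : B.IsAlt) (z : M) :
    B e f ∣ B f z :=
  hmin.dvd_of_forall_exists_apply_eq fun α β =>
    ⟨f, -α • e + β • z, by simp [← hB.neg_eq e f]⟩

theorem dvd_apply_of_mem_orthogonal (hmin : B.IsDvdMinimalValue e f) (hB : B.IsAlt)
    {u v : M} (hu : u ∈ B.orthogonal (span R {e, f})) (hv : v ∈ B.orthogonal (span R {e, f})) :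
    B e f ∣ B u v := by
  rw [mem_orthogonal_span_pair] at hu hv
  refine hmin.dvd_of_forall_exists_apply_eq fun α β => ⟨α • e + β • u, f + v, ?_⟩
  simp [hv.1, ← hB.neg_eq f u, hu.2]

end IsDvdMinimalValue

theorem IsOrderedParaSymplectic.cons (hB : B.IsAlt) {n : ℕ} {v : Fin n ⊕ Fin n → M}
    {d : Fin n → R} (hv : B.IsOrderedParaSymplectic v d) {e f : M} (hef : B e f ≠ 0)
    (he : ∀ i, B e (v i) = 0) (hf : ∀ i, B f (v i) = 0) (hdvd : ∀ i, B e f ∣ d i) :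
    B.IsOrderedParaSymplectic (Sum.elim (Fin.cons e (v ∘ Sum.inl)) (Fin.cons f (v ∘ Sum.inr)))
      (Fin.cons (B e f) d) := by
  obtain ⟨hd, hll, hrr, hlr, hchain⟩ := hv
  have he' : ∀ i, B (v i) e = 0 := fun i => by rw [← hB.neg_eq, he, neg_zero]
  have hf' : ∀ i, B (v i) f = 0 := fun i => by rw [← hB.neg_eq, hf, neg_zero]
  refine ⟨Fin.cases hef hd, ?_, ?_, ?_, ?_⟩ <;> intro i j <;>
    cases i using Fin.cases <;> cases j using Fin.cases <;>
      simp +contextual [hB.self_eq_zero, he, hf, he', hf', hll, hrr, hlr, hdvd, hchain,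
        Fin.succ_ne_zero, (Fin.succ_ne_zero _).symm]

theorem exists_basis_cons {W : Submodule R M} {e f : M}
    (hli : LinearIndependent R (Sum.elim (fun _ : Unit => e) (fun _ : Unit => f)))
    (hW : IsCompl W (span R {e, f})) {n : ℕ} (bW : Basis (Fin n ⊕ Fin n) R W) :
    ∃ b : Basis (Fin (n + 1) ⊕ Fin (n + 1)) R M,
      ⇑b = Sum.elim (Fin.cons e fun i => bW (.inl i)) (Fin.cons f fun i => bW (.inr i)) := by
  let bp := (Basis.span hli).map (LinearEquiv.ofEq _ _ (by rw [Set.range_sum_elim_unit]))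
  let b := (bW.prod bp).map (prodEquivOfIsCompl W _ hW)
  let E : Fin (n + 1) ≃ Fin n ⊕ Unit := (finSuccEquiv n).trans (Equiv.optionEquivSumPUnit _)
  refine ⟨b.reindex ((E.sumCongr E).trans (Equiv.sumSumSumComm _ _ _ _)).symm, ?_⟩
  ext (i | i) <;> cases i using Fin.cases <;> simp [b, bp, E]

theorem exists_basis_isOrderedParaSymplectic [IsDomain R] [IsPrincipalIdealRing R] [Free R M]
    [Module.Finite R M] (hB : B.IsAlt) (hnd : B.SeparatingLeft) {m : ℕ}
    (hrank : finrank R M = 2 * m) :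
    ∃ (b : Basis (Fin m ⊕ Fin m) R M) (d : Fin m → R), B.IsOrderedParaSymplectic b d := by
  induction m generalizing M with
  | zero =>
    have : Subsingleton M := finrank_zero_iff.mp hrank
    exact ⟨Basis.empty _, finZeroElim, by simp [IsOrderedParaSymplectic]⟩
  | succ n ih =>
    have : Nontrivial M := nontrivial_of_finrank_pos (R := R) (by omega)
    obtain ⟨x, hx⟩ := exists_ne (0 : M)
    obtain ⟨e, f, hef, hmin⟩ := exists_isDvdMinimalValue ⟨x, not_forall.mp (mt (hnd x) hx)⟩
    set W := B.orthogonal (span R {e, f})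
    have hW : IsCompl W (span R {e, f}) := isCompl_orthogonal_span_pair hB hef
      hmin.dvd_apply_left (hmin.dvd_apply_right hB)
    have hWortho : ∀ x ∈ W, ∀ y ∈ span R {e, f}, B x y = 0 := fun x hx y hy => by
      rw [← hB.neg_eq, mem_orthogonal_iff.mp hx y hy, neg_zero]
    have hrankW : finrank R W = 2 * n := by
      have := finrank_add_finrank_of_isCompl hW
      rw [finrank_span_pair hB hef] at this
      omega
    obtain ⟨bW, d, hbW⟩ := ih (B := B.restrict W) (fun x => hB x)
      (separatingLeft_restrict_of_isCompl hnd hW hWortho) hrankW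
    obtain ⟨b, hb⟩ := exists_basis_cons (linearIndependent_pair hB hef) hW bW
    refine ⟨b, Fin.cons (B e f) d, hb ▸ IsOrderedParaSymplectic.cons (v := fun i => (bW i : M))
      hB hbW hef (fun i => (mem_orthogonal_span_pair.mp (bW i).2).1)
      (fun i => (mem_orthogonal_span_pair.mp (bW i).2).2) fun i => ?_⟩
    have hdi := hbW.2.2.2.1 i i
    rw [if_pos rfl] at hdi
    exact hdi ▸ hmin.dvd_apply_of_mem_orthogonal hB (bW _).2 (bW _).2

end LinearMap.BilinForm

/-- Every free module of rank `2m` over a PID with a non-degenerate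
alternating bilinear form admits an ordered para-symplectic basis. -/
theorem stmt_0 (R : Type*) [CommRing R] [IsDomain R] [IsPrincipalIdealRing R]
    (Λ : Type*) [AddCommGroup Λ] [Module R Λ] [Module.Free R Λ] [Module.Finite R Λ]
    (m : ℕ) (hrank : Module.finrank R Λ = 2 * m)
    (B : LinearMap.BilinForm R Λ)
    (halt : ∀ x, B x x = 0)
    (hnd : ∀ x, (∀ y, B x y = 0) → x = 0) :
    ∃ (b : Module.Basis (Fin m ⊕ Fin m) R Λ) (d : Fin m → R),
      (∀ i, d i ≠ 0) ∧
      (∀ i j, B (b (Sum.inl i)) (b (Sum.inl j)) = 0) ∧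
      (∀ i j, B (b (Sum.inr i)) (b (Sum.inr j)) = 0) ∧
      (∀ i j, B (b (Sum.inl i)) (b (Sum.inr j)) = if i = j then d i else 0) ∧
      (∀ i j : Fin m, i ≤ j → d i ∣ d j) :=
  LinearMap.BilinForm.exists_basis_isOrderedParaSymplectic halt hnd hrank
end

section
/- Let R be a PID and Λ a free R-module of rank 2m with non-degenerate alternating form of square-free level N. If X is a maximal totally isotropic submodule of Λ (rank m), then there exist a basis e_1,…,e_m of X and vectors f_1,…,f_m ∈ Λ spanning a totally isotropic submodule with ⟨e_i,f_j⟩ = d_i δ_{ij}, d_i | N, such that Λ = ⊕_{i=1}^m R e_i ⊕ ⊕_{i=1}^m R f_i. -/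
/-!
Let `ψ : Λ → X^∨` send `y` to `⟨·, y⟩|_X`. Maximality makes `X` its own orthogonal, so
`ker ψ = X`; since `Λ/X ≅ im ψ` is free, `X` is a direct summand, and the level condition then
gives `N • X^∨ ⊆ im ψ`. A Smith normal form of `im ψ ⊆ X^∨` yields a basis `(φ_i)` of `X^∨`
with `im ψ = ⊕ d_i R φ_i` and `d_i ∣ N`. The basis `(e_i)` of `X` dual to `(φ_i)`, together with
lifts `g_i` of `d_i φ_i`, is a basis of `Λ` with `⟨e_k, g_l⟩ = d_k δ_kl`. Applying the level
condition to the `e_i`-coordinate shows `d_j ∣ (N / d_i) ⟨g_i, g_j⟩`; as `N` is square-free this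
puts `⟨g_i, g_j⟩` in `(d_i, d_j)`, which is exactly what is needed to make the `g_i` pairwise
orthogonal by adding combinations of the `e_k`.
-/

open Module Submodule

theorem mem_span_pair_of_squarefree_of_dvd_mul {R : Type*} [CommRing R] [IsBezout R]
    {a b c s : R} (hsf : Squarefree (a * s)) (h : b ∣ s * c) : c ∈ Ideal.span {a, b} := by
  rw [← IsBezout.span_gcd, Ideal.mem_span_singleton]
  have hcop : IsCoprime (IsBezout.gcd a b) s := isRelPrime_iff_isCoprime.mp
    ((IsRelPrime.of_squarefree_mul hsf).of_dvd_left (IsBezout.gcd_dvd_left a b))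
  exact hcop.dvd_of_dvd_mul_left ((IsBezout.gcd_dvd_right a b).trans h)

theorem LinearMap.exact_subtype_rangeRestrict {R M M' : Type*} [CommRing R]
    [AddCommGroup M] [Module R M] [AddCommGroup M'] [Module R M'] {ψ : M →ₗ[R] M'}
    {X : Submodule R M} (hX : ker ψ = X) : Function.Exact X.subtype ψ.rangeRestrict := by
  rw [LinearMap.exact_iff, ker_rangeRestrict, range_subtype, hX]

theorem LinearMap.exists_retraction_of_ker_eq {R M M' : Type*} [CommRing R]
    [AddCommGroup M] [Module R M] [AddCommGroup M'] [Module R M'] (ψ : M →ₗ[R] M')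
    [Module.Projective R (range ψ)] {X : Submodule R M} (hX : ker ψ = X) :
    ∃ π : M →ₗ[R] X, π ∘ₗ X.subtype = LinearMap.id := by
  obtain ⟨l, hl⟩ := Module.projective_lifting_property ψ.rangeRestrict LinearMap.id
    ψ.surjective_rangeRestrict
  have hsplit := ((exact_subtype_rangeRestrict hX).split_tfae X.injective_subtype
    ψ.surjective_rangeRestrict).out 0 1
  exact hsplit.mp ⟨l, hl⟩

theorem Module.Basis.exists_dualBasis_eq {R M ι : Type*} [CommRing R] [AddCommGroup M]
    [Module R M] [Module.Free R M] [Module.Finite R M] [Finite ι] [DecidableEq ι]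
    (b : Basis ι R (Dual R M)) : ∃ e : Basis ι R M, e.dualBasis = b := by
  set e := b.dualBasis.map (evalEquiv R M).symm
  refine ⟨e, Basis.eq_of_apply_eq fun i => e.ext fun j => ?_⟩
  rw [Basis.dualBasis_apply_self]
  simp only [e, Basis.map_apply, apply_evalEquiv_symm_apply, Basis.dualBasis_apply_self]
  exact if_congr eq_comm rfl rfl

theorem Submodule.exists_basis_smul_of_smul_mem {R M ι : Type*} [CommRing R] [IsDomain R]
    [IsPrincipalIdealRing R] [AddCommGroup M] [Module R M] [Fintype ι] (b : Basis ι R M)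
    (S : Submodule R M) {N : R} (hN : N ≠ 0) (hS : ∀ x, N • x ∈ S) :
    ∃ (b' : Basis ι R M) (d : ι → R) (c : Basis ι R S),
      (∀ i, d i ∣ N) ∧ ∀ i, (c i : M) = d i • b' i := by
  classical
  have := Module.Finite.of_basis b
  have := Module.Free.of_basis b
  have hrank : finrank R S = finrank R M := by
    refine le_antisymm S.finrank_le (LinearMap.finrank_le_finrank_of_injective
      (f := (N • LinearMap.id).codRestrict S hS) fun x y hxy => ?_)
    exact smul_right_injective M hN (congrArg Subtype.val hxy)
  obtain ⟨b', d, c, hc⟩ := S.exists_smith_normal_form_of_rank_eq b hrank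
  refine ⟨b', d, c, fun i => ⟨c.repr ⟨N • b' i, hS _⟩ i, ?_⟩, hc⟩
  have hexp := congrArg Subtype.val (c.sum_repr ⟨N • b' i, hS _⟩)
  simp only [coe_sum, coe_smul, hc] at hexp
  simpa [Finsupp.single_apply, mul_comm] using congrArg (fun x => b'.repr x i) hexp.symm

theorem LinearMap.exists_basis_sumElim_of_ker_eq {R M M' ι κ : Type*} [CommRing R]
    [AddCommGroup M] [Module R M] [AddCommGroup M'] [Module R M'] (ψ : M →ₗ[R] M')
    {X : Submodule R M} (hX : ker ψ = X) (e : Basis ι R X) (c : Basis κ R (range ψ))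
    (g : κ → M) (hg : ∀ k, ψ (g k) = c k) :
    ∃ b : Basis (ι ⊕ κ) R M, ⇑b = Sum.elim (fun i => (e i : M)) g := by
  let l : range ψ →ₗ[R] M := c.constr R g
  have hl : ψ.rangeRestrict ∘ₗ l = .id := c.ext fun k => Subtype.ext (by simp [l, hg])
  let split := (exact_subtype_rangeRestrict hX).splitSurjectiveEquiv X.injective_subtype
  let E := split ⟨l, hl⟩
  have hinr : E.1.symm ∘ₗ inr R X (range ψ) = l :=
    congrArg Subtype.val (split.symm_apply_apply ⟨l, hl⟩)
  refine ⟨(e.prod c).map E.1.symm, funext fun j => ?_⟩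
  rcases j with i | k
  · simpa using (LinearMap.congr_fun E.2.1 (e i)).symm
  · simpa [l] using LinearMap.congr_fun hinr (c k)

namespace LinearMap.BilinForm

variable {R M : Type*} [CommRing R] [AddCommGroup M] [Module R M] {B : LinearMap.BilinForm R M}

theorem ker_domRestrict_flip (B : LinearMap.BilinForm R M) (X : Submodule R M) :
    ker (B.domRestrict X).flip = B.orthogonal X := by
  ext y
  simp [DFunLike.ext_iff, mem_orthogonal_iff]

theorem orthogonal_eq_of_maximal_isotropic (hB : B.IsAlt) {X : Submodule R M}
    (hXiso : ∀ x ∈ X, ∀ y ∈ X, B x y = 0)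
    (hXmax : ∀ Y : Submodule R M, (∀ x ∈ Y, ∀ y ∈ Y, B x y = 0) → X ≤ Y → Y = X) :
    B.orthogonal X = X := by
  refine le_antisymm (fun y hy => ?_) fun x hx z hz => hXiso z hz x hx
  have hyX : ∀ x ∈ X, B x y = 0 := hy
  have hiso : ∀ u ∈ X ⊔ span R {y}, ∀ w ∈ X ⊔ span R {y}, B u w = 0 := by
    rintro u hu w hw
    obtain ⟨x₁, hx₁, z₁, hz₁, rfl⟩ := mem_sup.mp hu
    obtain ⟨x₂, hx₂, z₂, hz₂, rfl⟩ := mem_sup.mp hw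
    obtain ⟨r₁, rfl⟩ := mem_span_singleton.mp hz₁
    obtain ⟨r₂, rfl⟩ := mem_span_singleton.mp hz₂
    simp [hXiso x₁ hx₁ x₂ hx₂, hyX x₁ hx₁, hB.eq_iff.mp (hyX x₂ hx₂), hB y]
  rw [← hXmax _ hiso le_sup_left]
  exact mem_sup_right (mem_span_singleton_self y)

theorem smul_mem_range_domRestrict_flip (hB : B.IsAlt) {N : R}
    (hlevel : ∀ φ : Dual R M, ∃ v, ∀ x, N * φ x = B v x) {X : Submodule R M}
    (π : M →ₗ[R] X) (hπ : π ∘ₗ X.subtype = LinearMap.id) (φ : Dual R X) :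
    N • φ ∈ range (B.domRestrict X).flip := by
  obtain ⟨v, hv⟩ := hlevel (φ ∘ₗ π)
  refine ⟨-v, LinearMap.ext fun x => ?_⟩
  have hπx : π x = x := LinearMap.congr_fun hπ x
  change B x (-v) = N * φ x
  rw [map_neg, hB.neg_eq, ← hv, LinearMap.comp_apply, hπx]

theorem exists_basis_range_domRestrict_flip [IsDomain R] [IsPrincipalIdealRing R]
    [Module.Free R M] [Module.Finite R M] (hB : B.IsAlt) {N : R}
    (hlevel : ∀ φ : Dual R M, ∃ v, ∀ x, N * φ x = B v x) (hN : N ≠ 0) {X : Submodule R M}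
    (hX : ker (B.domRestrict X).flip = X) :
    ∃ (r : ℕ) (e : Basis (Fin r) R X) (d : Fin r → R)
      (c : Basis (Fin r) R (range (B.domRestrict X).flip)),
      (∀ i, d i ∣ N) ∧ ∀ i, (c i : Dual R X) = d i • e.dualBasis i := by
  have := Module.free_of_finite_type_torsion_free' (R := R) (M := range (B.domRestrict X).flip)
  obtain ⟨π, hπ⟩ := (B.domRestrict X).flip.exists_retraction_of_ker_eq hX
  obtain ⟨bD, d, c, hdN, hc⟩ := (range (B.domRestrict X).flip).exists_basis_smul_of_smul_mem
    (Module.finBasis R X).dualBasis hN (smul_mem_range_domRestrict_flip hB hlevel π hπ)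
  obtain ⟨e, rfl⟩ := bD.exists_dualBasis_eq
  exact ⟨_, e, d, c, hdN, hc⟩

variable {ι : Type*} [DecidableEq ι] {d : ι → R}

theorem sum_smul_apply_of_gram [Fintype ι] {e g : ι → M}
    (heg : ∀ k l, B (e k) (g l) = if k = l then d k else 0) (a : ι → R) (j : ι) :
    B (∑ k, a k • e k) (g j) = a j * d j := by
  simp [heg]

theorem apply_eq_mul_repr_of_gram (b : Basis (ι ⊕ ι) R M)
    (hee : ∀ k l, B (b (.inl k)) (b (.inl l)) = 0)
    (heg : ∀ k l, B (b (.inl k)) (b (.inr l)) = if k = l then d k else 0) (k : ι) (v : M) :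
    B (b (.inl k)) v = d k * b.repr v (.inr k) := by
  have h : B (b (.inl k)) = d k • b.coord (.inr k) := b.ext fun j => by
    rcases j with l | l
    · simp [hee]
    · by_cases hkl : k = l <;> simp [heg, hkl]
  simpa using LinearMap.congr_fun h v

theorem mem_span_pair_of_level [Fintype ι] [IsDomain R] [IsPrincipalIdealRing R] (hB : B.IsAlt)
    (b : Basis (ι ⊕ ι) R M) (hee : ∀ k l, B (b (.inl k)) (b (.inl l)) = 0)
    (heg : ∀ k l, B (b (.inl k)) (b (.inr l)) = if k = l then d k else 0)
    {N : R} (hN : Squarefree N) (hdN : ∀ i, d i ∣ N)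
    (hlevel : ∀ φ : Dual R M, ∃ v, ∀ x, N * φ x = B v x) (i j : ι) :
    B (b (.inr i)) (b (.inr j)) ∈ Ideal.span {d i, d j} := by
  obtain ⟨s, hs⟩ := hdN i
  obtain ⟨v, hv⟩ := hlevel (b.coord (.inl i))
  have hd0 : ∀ l, d l ≠ 0 := fun l h => hN.ne_zero (zero_dvd_iff.mp (h ▸ hdN l))
  have hpair : ∀ l, d l * b.repr v (.inr l) = -(N * if l = i then 1 else 0) := fun l => by
    rw [← apply_eq_mul_repr_of_gram b hee heg, ← hB.neg_eq, ← hv]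
    simp [Finsupp.single_apply]
  have hv_inr : ∀ l, b.repr v (.inr l) = if l = i then -s else 0 := fun l => by
    refine mul_left_cancel₀ (hd0 l) ((hpair l).trans ?_)
    rcases eq_or_ne l i with rfl | hl
    · simp [hs]
    · simp [hl]
  have hv_eq : v = ∑ k, b.repr v (.inl k) • b (.inl k) + (-s) • b (.inr i) := by
    conv_lhs => rw [← b.sum_repr v, Fintype.sum_sum_type]
    simp [hv_inr]
  have hdvd : d j ∣ s * B (b (.inr i)) (b (.inr j)) := by
    refine ⟨b.repr v (.inl j), ?_⟩
    have h0 := hv (b (.inr j))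
    rw [hv_eq] at h0
    simp only [map_add, LinearMap.add_apply, sum_smul_apply_of_gram heg, Basis.coord_apply,
      Basis.repr_self, ne_eq, reduceCtorEq, not_false_eq_true, Finsupp.single_eq_of_ne, mul_zero,
      neg_smul, map_neg, map_smul, LinearMap.neg_apply, LinearMap.smul_apply, smul_eq_mul] at h0
    linear_combination h0
  exact mem_span_pair_of_squarefree_of_dvd_mul (hs ▸ hN) hdvd

theorem exists_isotropic_of_mem_span_pair [Fintype ι] [LinearOrder ι] (hB : B.IsAlt)
    {e g : ι → M} (hee : ∀ k l, B (e k) (e l) = 0)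
    (heg : ∀ k l, B (e k) (g l) = if k = l then d k else 0)
    (hgg : ∀ i j, B (g i) (g j) ∈ Ideal.span {d i, d j}) :
    ∃ f : ι → M, (∀ i, f i - g i ∈ span R (Set.range e)) ∧
      (∀ k l, B (e k) (f l) = if k = l then d k else 0) ∧ ∀ i j, B (f i) (f j) = 0 := by
  choose α β hαβ using fun i j => Ideal.mem_span_pair.mp (hgg i j)
  -- For `i < j`, `f i` absorbs `-β i j • e j` and `f j` absorbs `α i j • e i`, so that
  -- `⟨f i, f j⟩ = ⟨g i, g j⟩ - α i j * d i - β i j * d j = 0`.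
  let a : ι → ι → R := fun i k => if i < k then -β i k else α k i
  refine ⟨fun i => g i + ∑ k, a i k • e k, fun i => ?_, fun k l => ?_, fun i j => ?_⟩
  · simpa using sum_mem fun k _ => smul_mem _ (a i k) (subset_span (Set.mem_range_self k))
  · simp [heg, hee]
  · have hexp : B (g i + ∑ k, a i k • e k) (g j + ∑ k, a j k • e k) =
        B (g i) (g j) + a i j * d j - a j i * d i := by
      have hgi : B (g i) (∑ k, a j k • e k) = -(a j i * d i) := by
        rw [← hB.neg_eq, sum_smul_apply_of_gram heg]
      have hee' : B (∑ k, a i k • e k) (∑ k, a j k • e k) = 0 := by simp [hee]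
      simp only [map_add, LinearMap.add_apply, hgi, hee', sum_smul_apply_of_gram heg]
      ring
    rw [hexp]
    rcases lt_trichotomy i j with hij | rfl | hij
    · simp only [a, hij, lt_asymm hij, ↓reduceIte]
      linear_combination -hαβ i j
    · simp [hB (g i)]
    · simp only [a, hij, lt_asymm hij, ↓reduceIte]
      linear_combination hαβ j i - hB.neg_eq (g j) (g i)

end LinearMap.BilinForm

theorem stmt_2_general (R : Type*) [CommRing R] [IsDomain R] [IsPrincipalIdealRing R]
    (Λ : Type*) [AddCommGroup Λ] [Module R Λ] [Module.Free R Λ] [Module.Finite R Λ]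
    (m : ℕ) (hrank : Module.finrank R Λ = 2 * m)
    (B : LinearMap.BilinForm R Λ)
    (halt : ∀ x, B x x = 0)
    (N : R) (hNsf : Squarefree N)
    (hlevel : ∀ φ : Λ →ₗ[R] R, ∃ v : Λ, ∀ x, N * φ x = B v x)
    (X : Submodule R Λ)
    (hXiso : ∀ x ∈ X, ∀ y ∈ X, B x y = 0)
    (hXmax : ∀ Y : Submodule R Λ, (∀ x ∈ Y, ∀ y ∈ Y, B x y = 0) → X ≤ Y → Y = X) :
    ∃ (b : Module.Basis (Fin m ⊕ Fin m) R Λ) (d : Fin m → R),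
      (∀ i, b (Sum.inl i) ∈ X) ∧
      Submodule.span R (Set.range fun i => b (Sum.inl i)) = X ∧
      (∀ i, d i ∣ N) ∧
      (∀ i j, B (b (Sum.inr i)) (b (Sum.inr j)) = 0) ∧
      (∀ i j, B (b (Sum.inl i)) (b (Sum.inr j)) = if i = j then d i else 0) := by
  classical
  set ψ := (B.domRestrict X).flip
  have hker : LinearMap.ker ψ = X :=
    (B.ker_domRestrict_flip X).trans (B.orthogonal_eq_of_maximal_isotropic halt hXiso hXmax)
  obtain ⟨r, e, d, c, hdN, hc⟩ :=
    B.exists_basis_range_domRestrict_flip halt hlevel hNsf.ne_zero hker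
  have hspan : span R (Set.range fun i => (e i : Λ)) = X :=
    (span_range_subtype_eq_top_iff X fun i => (e i).2).mp (by simp)
  have hee : ∀ k l, B (e k) (e l) = 0 := fun k l => hXiso _ (e k).2 _ (e l).2
  have heg : ∀ g : Fin r → Λ, (∀ i, ψ (g i) = c i) →
      ∀ k l, B (e k) (g l) = if k = l then d k else 0 := fun g hg k l => by
    change ψ (g l) (e k) = _
    by_cases hkl : k = l <;> simp [hg, hc, hkl]
  choose g hg using fun i => (c i).2
  obtain ⟨b₀, hb₀⟩ := ψ.exists_basis_sumElim_of_ker_eq hker e c g hg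
  have hgg : ∀ i j, B (g i) (g j) ∈ Ideal.span {d i, d j} := by
    simpa [hb₀] using B.mem_span_pair_of_level halt b₀ (by simpa [hb₀] using hee)
      (by simpa [hb₀] using heg g hg) hNsf hdN hlevel
  obtain ⟨f, hfg, hef, hff⟩ := B.exists_isotropic_of_mem_span_pair halt hee (heg g hg) hgg
  have hψf : ∀ i, ψ (f i) = c i := fun i => by
    rw [← hg i, ← sub_eq_zero, ← map_sub, ← LinearMap.mem_ker, hker, ← hspan]
    exact hfg i
  obtain ⟨b, hb⟩ := ψ.exists_basis_sumElim_of_ker_eq hker e c f hψf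
  obtain rfl : r = m := by
    have := Module.finrank_eq_card_basis b
    simp only [Fintype.card_sum, Fintype.card_fin] at this
    omega
  exact ⟨b, d, fun i => by simp [hb], by simpa [hb] using hspan, hdN,
    fun i j => by simp [hb, hff], fun i j => by simp [hb, hef]⟩

/-- A maximal totally isotropic submodule `X` (of rank `m`) of a lattice
of square-free level `N` extends to a para-symplectic basis of the whole lattice:
there are a basis `e` of `X` and vectors `f` spanning a totally isotropic submodule
with `⟨e i, f j⟩ = d i δ_{ij}`, `d i ∣ N`, such that the `e`'s and `f`'s together
form a basis of `Λ`. -/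
theorem stmt_2 (R : Type*) [CommRing R] [IsDomain R] [IsPrincipalIdealRing R]
    (Λ : Type*) [AddCommGroup Λ] [Module R Λ] [Module.Free R Λ] [Module.Finite R Λ]
    (m : ℕ) (hrank : Module.finrank R Λ = 2 * m)
    (B : LinearMap.BilinForm R Λ)
    (halt : ∀ x, B x x = 0)
    (hnd : ∀ x, (∀ y, B x y = 0) → x = 0)
    (N : R) (hN0 : N ≠ 0) (hNsf : Squarefree N)
    (hlevel : ∀ φ : Λ →ₗ[R] R, ∃ v : Λ, ∀ x, N * φ x = B v x)
    (X : Submodule R Λ)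
    (hXiso : ∀ x ∈ X, ∀ y ∈ X, B x y = 0)
    (hXmax : ∀ Y : Submodule R Λ, (∀ x ∈ Y, ∀ y ∈ Y, B x y = 0) → X ≤ Y → Y = X) :
    ∃ (b : Module.Basis (Fin m ⊕ Fin m) R Λ) (d : Fin m → R),
      (∀ i, b (Sum.inl i) ∈ X) ∧
      Submodule.span R (Set.range fun i => b (Sum.inl i)) = X ∧
      (∀ i, d i ∣ N) ∧
      (∀ i j, B (b (Sum.inr i)) (b (Sum.inr j)) = 0) ∧
      (∀ i j, B (b (Sum.inl i)) (b (Sum.inr j)) = if i = j then d i else 0) :=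
  stmt_2_general R Λ m hrank B halt N hNsf hlevel X hXiso hXmax
end

section
/- Let R be a PID and Λ a free R-module of rank 2m with a non-degenerate alternating form of square-free level N, given a basis e_1,…,e_m,f_1,…,f_m for which the Gram matrix is (0 A; −ᵗA 0). Suppose det A = D (up to units) and d̃_1,…,d̃_m are divisors of N with d̃_1···d̃_m = D (up to units). Then M = ⊕ R e_i has a basis ẽ_1,…,ẽ_m and M' = ⊕ R f_i has a basis f̃_1,…,f̃_m with ⟨ẽ_i, f̃_j⟩ = d̃_i δ_{ij}. In particular the isometry class of (Λ,⟨,⟩) is determined by the class D·R^× together with m and N. -/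
/-!
Over a PID the pairing matrix `A` between `M` and `M'` is equivalent (by Smith normal form; row
and column operations are changes of basis of `M` and `M'`) to a diagonal matrix `diag d`.
The level condition gives a matrix `C` with `C * A = N • 1`, hence every `d i` divides `N`.
Because `N` is squarefree, a diagonal matrix with entries dividing `N` is determined up to
equivalence by its determinant: for each prime `p` the number of entries divisible by `p` is the
multiplicity of `p` in the determinant, and `p` can be moved from one entry to another, since
`diag (p * z, x)` and `diag (z, p * x)` (with `p ∤ z`, `p ∤ x`) have associated gcds and equal
products of entries, and these determine a `2 × 2` diagonal matrix up to equivalence. So `A` is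
equivalent to `diag d̃`; the corresponding bases of `M` and `M'` together form a basis of `Λ`
with Gram matrix `(0, diag d̃; -diag d̃, 0)`, which depends only on `d̃`; this gives the isometry.
-/

open Finset Matrix

namespace Matrix

variable {ι κ R : Type*} [Fintype ι] [DecidableEq ι] [Fintype κ] [DecidableEq κ] [CommRing R]

def Equivalent (A B : Matrix ι ι R) : Prop :=
  ∃ P Q : Matrix ι ι R, IsUnit P.det ∧ IsUnit Q.det ∧ P * A * Q = B

namespace Equivalent

variable {A B C : Matrix ι ι R}

theorem symm (h : A.Equivalent B) : B.Equivalent A := by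
  obtain ⟨P, Q, hP, hQ, rfl⟩ := h
  refine ⟨P⁻¹, Q⁻¹, isUnit_nonsing_inv_det P hP, isUnit_nonsing_inv_det Q hQ, ?_⟩
  simp only [Matrix.mul_assoc, mul_nonsing_inv _ hQ, Matrix.mul_one,
    ← Matrix.mul_assoc P⁻¹, nonsing_inv_mul _ hP, Matrix.one_mul]

theorem trans (h₁ : A.Equivalent B) (h₂ : B.Equivalent C) : A.Equivalent C := by
  obtain ⟨P, Q, hP, hQ, rfl⟩ := h₁
  obtain ⟨P', Q', hP', hQ', rfl⟩ := h₂
  refine ⟨P' * P, Q * Q', by simpa using hP'.mul hP, by simpa using hQ.mul hQ', ?_⟩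
  simp only [Matrix.mul_assoc]

theorem det_associated (h : A.Equivalent B) : Associated A.det B.det := by
  obtain ⟨P, Q, ⟨u, hu⟩, ⟨v, hv⟩, rfl⟩ := h
  exact ⟨u * v, by simp only [det_mul, Units.val_mul, hu, hv]; ring⟩

theorem submatrix (h : A.Equivalent B) (e : κ ≃ ι) :
    (A.submatrix e e).Equivalent (B.submatrix e e) := by
  obtain ⟨P, Q, hP, hQ, rfl⟩ := h
  refine ⟨P.submatrix e e, Q.submatrix e e, by rwa [det_submatrix_equiv_self],
    by rwa [det_submatrix_equiv_self], ?_⟩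
  simp only [submatrix_mul_equiv]

theorem diagonal_sumElim {x x' : ι → R} (h : (diagonal x).Equivalent (diagonal x'))
    (y : κ → R) : (diagonal (Sum.elim x y)).Equivalent (diagonal (Sum.elim x' y)) := by
  obtain ⟨P, Q, hP, hQ, h⟩ := h
  refine ⟨fromBlocks P 0 0 1, fromBlocks Q 0 0 1, by simpa [det_fromBlocks_zero₂₁] using hP,
    by simpa [det_fromBlocks_zero₂₁] using hQ, ?_⟩
  simp [← fromBlocks_diagonal, fromBlocks_multiply, h]

theorem diagonal_update_update {d : ι → R} {i j : ι} (hij : i ≠ j) {x y : R}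
    (h : (diagonal ![d i, d j]).Equivalent (diagonal ![x, y])) :
    (diagonal d).Equivalent (diagonal (Function.update (Function.update d i x) j y)) := by
  let S := {k : ι // k ≠ i ∧ k ≠ j}
  have hbij : Function.Bijective (Sum.elim ![i, j] ((↑) : S → ι)) := by
    refine ⟨Function.Injective.sumElim ?_ Subtype.val_injective ?_, fun k => ?_⟩
    · intro a b hab
      fin_cases a <;> fin_cases b <;> simp_all [hij.symm]
    · rintro a ⟨k, hki, hkj⟩
      fin_cases a
      exacts [Ne.symm hki, Ne.symm hkj]
    · by_cases hki : k = i
      · exact ⟨Sum.inl 0, by simp [hki]⟩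
      by_cases hkj : k = j
      · exact ⟨Sum.inl 1, by simp [hkj]⟩
      exact ⟨Sum.inr ⟨k, hki, hkj⟩, rfl⟩
  let e := Equiv.ofBijective _ hbij
  have he (f : ι → R) : diagonal f = (diagonal (f ∘ e)).submatrix e.symm e.symm := by
    simp [submatrix_diagonal_equiv, Function.comp_assoc]
  rw [he d, he (Function.update _ j y)]
  refine Equivalent.submatrix ?_ e.symm
  convert h.diagonal_sumElim (fun k : S => d k) using 2 <;> ext (a | k)
  · fin_cases a <;> rfl
  · rfl
  · fin_cases a <;> simp [e, hij]
  · simp [e, k.2.1, k.2.2]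

theorem dvd_of_mul_eq_smul_one {A C : Matrix ι ι R} {d : ι → R} {N : R}
    (h : A.Equivalent (diagonal d)) (hCA : C * A = N • 1) (i : ι) : d i ∣ N := by
  obtain ⟨P, Q, hP, hQ, hPAQ⟩ := h
  have hE : Q⁻¹ * C * P⁻¹ * diagonal d = N • 1 := by
    rw [← hPAQ]
    calc Q⁻¹ * C * P⁻¹ * (P * A * Q) = Q⁻¹ * (C * (P⁻¹ * P) * A) * Q := by
          simp only [Matrix.mul_assoc]
      _ = N • 1 := by
          rw [nonsing_inv_mul _ hP, Matrix.mul_one, hCA, Matrix.mul_smul, Matrix.mul_one,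
            Matrix.smul_mul, nonsing_inv_mul _ hQ]
  exact ⟨(Q⁻¹ * C * P⁻¹) i i, by simpa [mul_comm] using (congrFun (congrFun hE i) i).symm⟩

end Equivalent

theorem equivalent_diagonal_of_associated {d d' : ι → R} (h : ∀ i, Associated (d i) (d' i)) :
    (diagonal d).Equivalent (diagonal d') := by
  choose u hu using h
  refine ⟨1, diagonal fun i => (u i : R), by simp, ?_, ?_⟩
  · rw [det_diagonal, ← Units.coe_prod]
    exact Units.isUnit _
  · rw [Matrix.one_mul, diagonal_mul_diagonal]
    exact congrArg diagonal (funext hu)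

section Bezout

variable [IsDomain R] [IsBezout R]

theorem equivalent_diagonal_gcd (a b : R) {c : R} (hg : IsBezout.gcd a b ≠ 0)
    (hc : IsBezout.gcd a b * c = a * b) :
    (diagonal ![a, b]).Equivalent (diagonal ![IsBezout.gcd a b, c]) := by
  obtain ⟨u, v, huv⟩ := IsBezout.gcd_eq_sum a b
  obtain ⟨a', ha⟩ := IsBezout.gcd_dvd_left a b
  obtain ⟨b', hb⟩ := IsBezout.gcd_dvd_right a b
  generalize IsBezout.gcd a b = g at *
  subst ha hb
  have h1 : u * a' + v * b' = 1 := mul_left_cancel₀ hg (by linear_combination huv)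
  have hc' : c = a' * (g * b') := mul_left_cancel₀ hg (by linear_combination hc)
  refine ⟨!![u, v; -b', a'], !![1, -(v * b'); 1, 1 - v * b'], ?_, ?_, ?_⟩
  · simp only [det_fin_two_of]
    convert isUnit_one
    linear_combination h1
  · simp only [det_fin_two_of]
    convert isUnit_one
    ring
  rw [hc', diagonal_vec2, diagonal_vec2, mul_fin_two, mul_fin_two]
  simp only [EmbeddingLike.apply_eq_iff_eq, vecCons_inj, and_true]
  exact ⟨⟨by linear_combination g * h1, by linear_combination (-g * v * b') * h1⟩, by ring,
    by ring⟩

theorem equivalent_diagonal_pair_of_associated_gcd {a b a' b' : R} (hg : IsBezout.gcd a b ≠ 0)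
    (hgcd : Associated (IsBezout.gcd a b) (IsBezout.gcd a' b')) (hmul : a * b = a' * b') :
    (diagonal ![a, b]).Equivalent (diagonal ![a', b']) := by
  obtain ⟨c, hc⟩ := (IsBezout.gcd_dvd_left a b).mul_right b
  obtain ⟨c', hc'⟩ := (IsBezout.gcd_dvd_left a' b').mul_right b'
  have hg' : IsBezout.gcd a' b' ≠ 0 := fun h => hg (hgcd.eq_zero_iff.mpr h)
  have hcc' : Associated c c' := Associated.of_mul_left (by rw [← hc, ← hc', hmul]; rfl) hgcd hg
  exact ((equivalent_diagonal_gcd a b hg hc.symm).trans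
    (equivalent_diagonal_of_associated fun i => by fin_cases i <;> simpa)).trans
    (equivalent_diagonal_gcd a' b' hg' hc'.symm).symm

theorem equivalent_diagonal_move_prime {p z x : R} (hp : Prime p) (hz : ¬p ∣ z) (hx : ¬p ∣ x)
    (hx0 : x ≠ 0) : (diagonal ![p * z, x]).Equivalent (diagonal ![z, p * x]) := by
  have hdvd {g y w : R} (hgy : g ∣ p * y) (hgw : g ∣ w) (hw : ¬p ∣ w) : g ∣ y :=
    ((hp.coprime_iff_not_dvd.mpr fun hpg => hw (hpg.trans hgw)).symm).dvd_of_dvd_mul_left hgy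
  have hg : IsBezout.gcd (p * z) x ≠ 0 := fun h =>
    hx0 (zero_dvd_iff.mp (h ▸ IsBezout.gcd_dvd_right _ _))
  refine equivalent_diagonal_pair_of_associated_gcd hg (associated_of_dvd_dvd ?_ ?_) (by ring)
  · exact IsBezout.dvd_gcd (hdvd (IsBezout.gcd_dvd_left _ _) (IsBezout.gcd_dvd_right _ _) hx)
      ((IsBezout.gcd_dvd_right _ _).mul_left p)
  · refine IsBezout.dvd_gcd ((IsBezout.gcd_dvd_left _ _).mul_left p) ?_
    exact hdvd (IsBezout.gcd_dvd_right _ _) (IsBezout.gcd_dvd_left _ _) hz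

end Bezout

end Matrix

@[to_additive]
theorem Finset.prod_mul_eq_prod_mul_of_eq_off_pair {ι M : Type*} [Fintype ι] [DecidableEq ι]
    [CommMonoid M] {f g : ι → M} {i j : ι} (hij : i ≠ j)
    (h : ∀ k, k ≠ i → k ≠ j → f k = g k) :
    (∏ k, f k) * (g i * g j) = (∏ k, g k) * (f i * f j) := by
  rw [← prod_sdiff (subset_univ {i, j}), ← prod_sdiff (subset_univ {i, j}) (f := g),
    prod_pair hij, prod_pair hij, prod_congr rfl fun k hk => h k (by simp_all) (by simp_all)]
  ac_rfl

theorem Squarefree.emultiplicity_eq_ite {R : Type*} [CommMonoid R] {p x : R}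
    (hx : Squarefree x) (hp : ¬IsUnit p) [Decidable (p ∣ x)] :
    emultiplicity p x = if p ∣ x then 1 else 0 := by
  split_ifs with h
  · exact le_antisymm (((squarefree_iff_emultiplicity_le_one x).mp hx p).resolve_right hp)
      (Order.one_le_iff_pos.mpr (emultiplicity_pos_of_dvd h))
  · exact emultiplicity_eq_zero.mpr h

theorem card_filter_dvd_eq_of_associated_prod {ι R : Type*} [Fintype ι]
    [CommMonoidWithZero R] [IsCancelMulZero R] [DecidableRel (α := R) (· ∣ ·)] {p : R}
    (hp : Prime p) {d d' : ι → R} (hd : ∀ i, Squarefree (d i)) (hd' : ∀ i, Squarefree (d' i))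
    (h : Associated (∏ i, d i) (∏ i, d' i)) :
    #{i | p ∣ d i} = #{i | p ∣ d' i} := by
  have key : ∀ f : ι → R, (∀ i, Squarefree (f i)) →
      emultiplicity p (∏ i, f i) = #{i | p ∣ f i} := fun f hf => by
    simp [Finset.emultiplicity_prod hp, (hf _).emultiplicity_eq_ite hp.not_isUnit]
  exact_mod_cast
    (key d hd).symm.trans ((emultiplicity_eq_of_associated_right h).trans (key d' hd'))

theorem associated_of_forall_dvd_of_associated_prod {ι R : Type*} [Fintype ι]
    [CommMonoidWithZero R] [IsCancelMulZero R] {d d' : ι → R} (hdvd : ∀ i, d i ∣ d' i)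
    (h : Associated (∏ i, d i) (∏ i, d' i)) (h0 : ∏ i, d i ≠ 0) (i : ι) :
    Associated (d i) (d' i) := by
  choose c hc using hdvd
  have hunit : IsUnit (∏ i, c i) := by
    obtain ⟨u, hu⟩ := h
    have hcu : ∏ i, c i = u := mul_left_cancel₀ h0 <| by
      rw [← prod_mul_distrib, hu]
      exact prod_congr rfl fun i _ => (hc i).symm
    exact hcu ▸ u.isUnit
  exact ⟨(isUnit_of_dvd_unit (dvd_prod_of_mem c (mem_univ i)) hunit).unit, (hc i).symm⟩

theorem Multiset.cons_sub_of_notMem {α : Type*} [DecidableEq α] {a : α} {s t : Multiset α}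
    (ht : a ∉ t) : a ::ₘ s - t = a ::ₘ (s - t) := by
  ext b
  by_cases hb : b = a
  · subst hb
    simp [Multiset.count_eq_zero.mpr ht]
  · simp [hb]

theorem Multiset.cons_sub_of_mem {α : Type*} [DecidableEq α] {a : α} {s t : Multiset α}
    (hs : a ∉ s) (ht : a ∈ t) : a ::ₘ s - t = s - t := by
  ext b
  by_cases hb : b = a
  · subst hb
    have := Multiset.one_le_count_iff_mem.mpr ht
    rw [Multiset.count_sub, Multiset.count_sub, Multiset.count_cons_self,
      Multiset.count_eq_zero.mpr hs]
    omega
  · simp [hb]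

section PID

variable {R : Type*} [CommRing R] [IsDomain R] [IsPrincipalIdealRing R]

theorem Squarefree.exists_prime_dvd_not_dvd {a b : R} (ha : Squarefree a) (h : ¬a ∣ b) :
    ∃ p, Prime p ∧ p ∣ a ∧ ¬p ∣ b := by
  obtain ⟨r, hr⟩ := IsBezout.gcd_dvd_left a b
  have hr0 : r ≠ 0 := by rintro rfl; exact ha.ne_zero (by simpa using hr)
  have hru : ¬IsUnit r := fun hu => h <| (dvd_of_eq hr).trans <|
    (associated_mul_unit_right _ r hu).symm.dvd.trans (IsBezout.gcd_dvd_right a b)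
  obtain ⟨p, hp, hpr⟩ := WfDvdMonoid.exists_irreducible_factor hru hr0
  have hpa : p ∣ a := (hpr.mul_left _).trans (dvd_of_eq hr.symm)
  refine ⟨p, hp.prime, hpa, fun hpb => hp.not_isUnit (ha p ?_)⟩
  exact (mul_dvd_mul (IsBezout.dvd_gcd hpa hpb) hpr).trans (dvd_of_eq hr.symm)

variable {ι : Type*} [Fintype ι]

theorem exists_prime_to_move {d d' : ι → R} (hd : ∀ i, Squarefree (d i))
    (hd' : ∀ i, Squarefree (d' i)) (h : Associated (∏ i, d i) (∏ i, d' i)) {i : ι}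
    (hi : ¬d i ∣ d' i) :
    ∃ p j, Prime p ∧ i ≠ j ∧ p ∣ d i ∧ ¬p ∣ d' i ∧ p ∣ d' j ∧ ¬p ∣ d j := by
  classical
  obtain ⟨p, hp, hpi, hpi'⟩ := (hd i).exists_prime_dvd_not_dvd hi
  obtain ⟨j, hpj', hpj⟩ : ∃ j, p ∣ d' j ∧ ¬p ∣ d j := by
    by_contra! H
    have hlt : #{k | p ∣ d' k} < #{k | p ∣ d k} :=
      card_lt_card ((ssubset_iff_of_subset fun k => by simpa using H k).mpr
        ⟨i, by simp [hpi], by simp [hpi']⟩)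
    exact hlt.ne (card_filter_dvd_eq_of_associated_prod hp hd hd' h).symm
  exact ⟨p, j, hp, fun hij => hpj (hij ▸ hpi), hpi, hpi', hpj', hpj⟩

variable [DecidableEq ι]

section Mismatch

open UniqueFactorizationMonoid

variable [NormalizationMonoid R]

theorem normalize_mem_normalizedFactors_iff {p x : R} (hp : Prime p) (hx : x ≠ 0) :
    normalize p ∈ normalizedFactors x ↔ p ∣ x := by
  rw [mem_normalizedFactors_iff' hx, normalize_idem, normalize_dvd_iff]
  simp [(associated_normalize p).irreducible hp.irreducible]

theorem normalizedFactors_prime_mul {p x : R} (hp : Prime p) (hx : x ≠ 0) :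
    normalizedFactors (p * x) = normalize p ::ₘ normalizedFactors x := by
  rw [normalizedFactors_mul hp.ne_zero hx, normalizedFactors_irreducible hp.irreducible,
    Multiset.singleton_add]

variable [DecidableEq R]

theorem card_normalizedFactors_prime_mul_sub_of_not_dvd {p x y : R} (hp : Prime p) (hx : x ≠ 0)
    (hy : y ≠ 0) (hpy : ¬p ∣ y) :
    Multiset.card (normalizedFactors (p * x) - normalizedFactors y) =
      Multiset.card (normalizedFactors x - normalizedFactors y) + 1 := by
  rw [normalizedFactors_prime_mul hp hx,
    Multiset.cons_sub_of_notMem ((normalize_mem_normalizedFactors_iff hp hy).not.mpr hpy),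
    Multiset.card_cons]

theorem card_normalizedFactors_prime_mul_sub_of_dvd {p x y : R} (hp : Prime p) (hx : x ≠ 0)
    (hy : y ≠ 0) (hpx : ¬p ∣ x) (hpy : p ∣ y) :
    Multiset.card (normalizedFactors (p * x) - normalizedFactors y) =
      Multiset.card (normalizedFactors x - normalizedFactors y) := by
  rw [normalizedFactors_prime_mul hp hx,
    Multiset.cons_sub_of_mem ((normalize_mem_normalizedFactors_iff hp hx).not.mpr hpx)
      ((normalize_mem_normalizedFactors_iff hp hy).mpr hpy)]

noncomputable def factorMismatch (d d' : ι → R) : ℕ :=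
  ∑ i, Multiset.card (normalizedFactors (d i) - normalizedFactors (d' i))

theorem exists_equivalent_diagonal_factorMismatch_lt {N : R} (hN : Squarefree N)
    {d d' : ι → R} (hd : ∀ k, d k ∣ N) (hd' : ∀ k, d' k ∣ N)
    (h : Associated (∏ k, d k) (∏ k, d' k)) {i : ι} (hi : ¬d i ∣ d' i) :
    ∃ e : ι → R, (diagonal d).Equivalent (diagonal e) ∧ (∀ k, e k ∣ N) ∧
      ∏ k, e k = ∏ k, d k ∧ factorMismatch e d' < factorMismatch d d' := by
  have hne : ∀ {x}, x ∣ N → x ≠ 0 := fun hx hx0 => hN.ne_zero (zero_dvd_iff.mp (hx0 ▸ hx))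
  obtain ⟨p, j, hp, hij, ⟨z, hz⟩, hpi', hpj', hpj⟩ :=
    exists_prime_to_move (fun k => hN.squarefree_of_dvd (hd k))
      (fun k => hN.squarefree_of_dvd (hd' k)) h hi
  have hz0 : z ≠ 0 := right_ne_zero_of_mul (hz ▸ hne (hd i))
  have hpz : ¬p ∣ z := fun hpz =>
    hp.not_isUnit (hN.squarefree_of_dvd (hd i) p (hz ▸ mul_dvd_mul_left p hpz))
  set e := Function.update (Function.update d i z) j (p * d j)
  have hei : e i = z := by simp [e, hij]
  have hej : e j = p * d j := by simp [e]
  have hek : ∀ k, k ≠ i → k ≠ j → d k = e k := fun k hki hkj => by simp [e, hki, hkj]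
  refine ⟨e, ?_, fun k => ?_, ?_, ?_⟩
  · exact Equivalent.diagonal_update_update hij
      (hz ▸ equivalent_diagonal_move_prime hp hpz hpj (hne (hd j)))
  · by_cases hki : k = i
    · exact hki ▸ hei ▸ (dvd_mul_left z p).trans (hz ▸ hd i)
    by_cases hkj : k = j
    · exact hkj ▸ hej ▸ (hp.coprime_iff_not_dvd.mpr hpj).mul_dvd (hpj'.trans (hd' j)) (hd j)
    · exact hek k hki hkj ▸ hd k
  · have := Finset.prod_mul_eq_prod_mul_of_eq_off_pair hij hek
    rw [hei, hej, hz] at this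
    refine mul_right_cancel₀ (mul_ne_zero (hz ▸ hne (hd i)) (hne (hd j))) ?_
    linear_combination this.symm
  · have := Finset.sum_add_eq_sum_add_of_eq_off_pair hij
      (f := fun k => Multiset.card (normalizedFactors (d k) - normalizedFactors (d' k)))
      (g := fun k => Multiset.card (normalizedFactors (e k) - normalizedFactors (d' k)))
      (fun k hki hkj => by rw [hek k hki hkj])
    simp only [hei, hej, hz,
      card_normalizedFactors_prime_mul_sub_of_not_dvd hp hz0 (hne (hd' i)) hpi',
      card_normalizedFactors_prime_mul_sub_of_dvd hp (hne (hd j)) (hne (hd' j)) hpj hpj'] at this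
    unfold factorMismatch
    omega

end Mismatch

theorem Matrix.equivalent_diagonal_of_squarefree {N : R} (hN : Squarefree N) {d d' : ι → R}
    (hd : ∀ i, d i ∣ N) (hd' : ∀ i, d' i ∣ N) (h : Associated (∏ i, d i) (∏ i, d' i)) :
    (diagonal d).Equivalent (diagonal d') := by
  classical
  let := UniqueFactorizationMonoid.strongNormalizationMonoid (α := R) |>.toNormalizationMonoid
  induction hn : factorMismatch d d' using Nat.strong_induction_on generalizing d with
  | _ n ih =>
  by_cases hall : ∀ i, d i ∣ d' i
  · refine equivalent_diagonal_of_associated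
      (associated_of_forall_dvd_of_associated_prod hall h (prod_ne_zero_iff.mpr fun i _ => ?_))
    exact fun h0 => hN.ne_zero (zero_dvd_iff.mp (h0 ▸ hd i))
  · obtain ⟨i, hi⟩ := not_forall.mp hall
    obtain ⟨e, hde, he, hprod, hlt⟩ :=
      exists_equivalent_diagonal_factorMismatch_lt hN hd hd' h hi
    exact hde.trans (ih _ (hn ▸ hlt) he (hprod ▸ h) rfl)

theorem Matrix.exists_equivalent_diagonal (A : Matrix ι ι R) (hA : A.det ≠ 0) :
    ∃ d : ι → R, A.Equivalent (diagonal d) := by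
  let b₀ := Pi.basisFun R ι
  have hinj : Function.Injective (toLin' A) :=
    mulVec_injective_of_det_mem_nonZeroDivisors (mem_nonZeroDivisors_of_ne_zero hA)
  obtain ⟨b, d, c, hc⟩ := (LinearMap.range (toLin' A)).exists_smith_normal_form_of_rank_eq b₀
    (LinearMap.finrank_range_of_inj hinj)
  let c' := c.map (LinearEquiv.ofInjective _ hinj).symm
  have hdiag : LinearMap.toMatrix c' b (toLin' A) = diagonal d := by
    ext i j
    have : toLin' A (c' j) = d j • b j := by
      rw [← hc]
      exact congrArg Subtype.val ((LinearEquiv.ofInjective _ hinj).apply_symm_apply (c j))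
    rw [LinearMap.toMatrix_apply, this, map_smul, b.repr_self, Finsupp.smul_apply,
      Finsupp.single_apply, diagonal_apply, smul_eq_mul]
    by_cases h : i = j <;> simp [h, eq_comm]
  refine ⟨d, b.toMatrix b₀, b₀.toMatrix c', isUnit_det_of_right_inverse
    (b.toMatrix_mul_toMatrix_flip b₀), isUnit_det_of_right_inverse
    (b₀.toMatrix_mul_toMatrix_flip c'), ?_⟩
  rw [← hdiag, ← basis_toMatrix_mul_linearMap_toMatrix_mul_basis_toMatrix c' b₀ b b₀,
    LinearMap.toMatrix_eq_toMatrix', LinearMap.toMatrix'_toLin']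

theorem Matrix.equivalent_diagonal_of_mul_eq_smul_one {A C : Matrix ι ι R} {N : R}
    (hN : Squarefree N) (hCA : C * A = N • 1) {d' : ι → R} (hd' : ∀ i, d' i ∣ N)
    (h : Associated (∏ i, d' i) A.det) : A.Equivalent (diagonal d') := by
  have hA : A.det ≠ 0 := fun h0 => pow_ne_zero (Fintype.card ι) hN.ne_zero <| by
    simpa [h0] using (congrArg det hCA).symm
  obtain ⟨d, hAd⟩ := exists_equivalent_diagonal A hA
  refine hAd.trans (equivalent_diagonal_of_squarefree hN (hAd.dvd_of_mul_eq_smul_one hCA) hd' ?_)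
  rw [← det_diagonal]
  exact hAd.det_associated.symm.trans h.symm

end PID

section Lattice

variable {R : Type*} [CommRing R] {M : Type*} [AddCommGroup M] [Module R M]

theorem Module.Basis.exists_basis_sumElim {ι κ : Type*} (b : Module.Basis (ι ⊕ κ) R M)
    {v : ι → M} {w : κ → M} (hv : LinearIndependent R v) (hw : LinearIndependent R w)
    (hvb : Submodule.span R (Set.range v) = Submodule.span R (Set.range fun i => b (Sum.inl i)))
    (hwb : Submodule.span R (Set.range w) = Submodule.span R (Set.range fun i => b (Sum.inr i))) :
    ∃ c : Module.Basis (ι ⊕ κ) R M, ⇑c = Sum.elim v w := by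
  have hb : Sum.elim (fun i => b (Sum.inl i)) (fun i => b (Sum.inr i)) = b :=
    Sum.elim_comp_inl_inr b
  have hdisj := (linearIndependent_sum.mp (hb ▸ b.linearIndependent)).2.2
  refine ⟨Module.Basis.mk ((linearIndependent_sum (v := Sum.elim v w)).mpr ⟨hv, hw, ?_⟩) ?_,
    Module.Basis.coe_mk _ _⟩
  · simpa only [Sum.elim_comp_inl, Sum.elim_comp_inr, hvb, hwb] using hdisj
  · rw [Set.Sum.elim_range, Submodule.span_union, hvb, hwb, ← Submodule.span_union,
      ← Set.Sum.elim_range, hb, b.span_eq]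

theorem LinearMap.BilinForm.exists_linearEquiv_of_basis_apply_eq {κ M₂ : Type*}
    [AddCommGroup M₂] [Module R M₂] {B : LinearMap.BilinForm R M}
    {B₂ : LinearMap.BilinForm R M₂} (c : Module.Basis κ R M) (c₂ : Module.Basis κ R M₂)
    (h : ∀ s t, B₂ (c₂ s) (c₂ t) = B (c s) (c t)) :
    ∃ φ : M ≃ₗ[R] M₂, ∀ x y, B₂ (φ x) (φ y) = B x y := by
  let φ := c.equiv c₂ (Equiv.refl κ)
  have : B₂.compl₁₂ (φ : M →ₗ[R] M₂) φ = B :=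
    LinearMap.ext_basis c c fun s t => by simp [φ, h]
  exact ⟨φ, fun x y => LinearMap.congr_fun₂ this x y⟩

variable {ι κ : Type*} [Fintype ι] [Fintype κ]

theorem Matrix.sum_smul_sum_smul_eq_vecMul (g : ι → R) (P : Matrix ι κ R) (v : κ → M) :
    ∑ i, g i • ∑ k, P i k • v k = ∑ k, (g ᵥ* P) k • v k := by
  simp only [Finset.smul_sum, smul_smul, vecMul, dotProduct, Finset.sum_smul]
  exact Finset.sum_comm

theorem LinearMap.apply_sum_smul_sum_smul {M' : Type*} [AddCommGroup M'] [Module R M']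
    (B : M →ₗ[R] M' →ₗ[R] R) (P : Matrix ι ι R) (Q : Matrix κ κ R) (x : ι → M)
    (y : κ → M') (i : ι) (j : κ) :
    B (∑ k, P i k • x k) (∑ l, Q j l • y l) =
      (P * of (fun k l => B (x k) (y l)) * Qᵀ) i j := by
  simp only [map_sum, map_smul, LinearMap.sum_apply, LinearMap.smul_apply, smul_eq_mul,
    Matrix.mul_apply, of_apply, transpose_apply, Finset.mul_sum, Finset.sum_mul]
  exact Finset.sum_congr rfl fun _ _ => Finset.sum_congr rfl fun _ _ => by ring

theorem LinearMap.BilinForm.exists_mul_eq_smul_one_of_level [DecidableEq κ]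
    {B : LinearMap.BilinForm R M} {N : R}
    (hlevel : ∀ φ : M →ₗ[R] R, ∃ v : M, ∀ x, N * φ x = B v x)
    (b : Module.Basis (ι ⊕ κ) R M) {A : Matrix ι κ R}
    (hff : ∀ i j, B (b (Sum.inr i)) (b (Sum.inr j)) = 0)
    (hef : ∀ i j, B (b (Sum.inl i)) (b (Sum.inr j)) = A i j) :
    ∃ C : Matrix κ ι R, C * A = N • 1 := by
  classical
  choose v hv using fun j => hlevel (b.coord (Sum.inr j))
  refine ⟨of fun j i => b.repr (v j) (Sum.inl i), ?_⟩
  ext j k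
  have hB : B (v j) (b (Sum.inr k)) = ∑ i, b.repr (v j) (Sum.inl i) * A i k := by
    conv_lhs => rw [← b.sum_repr (v j)]
    simp only [map_add, LinearMap.add_apply, map_sum, map_smul, LinearMap.sum_apply,
      LinearMap.smul_apply, smul_eq_mul, Fintype.sum_sum_type, hef, hff, mul_zero,
      Finset.sum_const_zero, add_zero]
  simpa [hB, Matrix.mul_apply, Matrix.one_apply, Finsupp.single_apply, eq_comm] using
    (hv j (b (Sum.inr k))).symm

variable [DecidableEq ι]

theorem LinearIndependent.sum_smul_of_isUnit_det {v : ι → M} (hv : LinearIndependent R v)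
    {P : Matrix ι ι R} (hP : IsUnit P.det) :
    LinearIndependent R fun i => ∑ k, P i k • v k := by
  rw [Fintype.linearIndependent_iff] at hv ⊢
  intro g hg
  have hgP : g ᵥ* P = 0 := funext (hv _ (by rwa [← Matrix.sum_smul_sum_smul_eq_vecMul]))
  have hg0 : g = 0 := by
    simpa [vecMul_vecMul, mul_nonsing_inv _ hP] using congrArg (· ᵥ* P⁻¹) hgP
  simp [hg0]

theorem span_range_sum_smul_of_isUnit_det (v : ι → M) {P : Matrix ι ι R} (hP : IsUnit P.det) :
    Submodule.span R (Set.range fun i => ∑ k, P i k • v k) =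
      Submodule.span R (Set.range v) := by
  refine le_antisymm (Submodule.span_le.mpr ?_) (Submodule.span_le.mpr ?_)
  · rintro _ ⟨i, rfl⟩
    exact Submodule.sum_mem _ fun k _ => Submodule.smul_mem _ _ (Submodule.subset_span ⟨k, rfl⟩)
  · rintro _ ⟨k, rfl⟩
    have hv : ∑ i, P⁻¹ k i • ∑ l, P i l • v l = v k := by
      rw [Matrix.sum_smul_sum_smul_eq_vecMul]
      simp [vecMul, dotProduct, ← Matrix.mul_apply, nonsing_inv_mul _ hP, one_apply]
    exact hv ▸ Submodule.sum_mem _ fun i _ =>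
      Submodule.smul_mem _ _ (Submodule.subset_span ⟨i, rfl⟩)

theorem LinearMap.BilinForm.exists_basis_apply_eq_fromBlocks {B : LinearMap.BilinForm R M}
    (halt : B.IsAlt) (b : Module.Basis (ι ⊕ ι) R M) {A D : Matrix ι ι R}
    (hee : ∀ i j, B (b (Sum.inl i)) (b (Sum.inl j)) = 0)
    (hff : ∀ i j, B (b (Sum.inr i)) (b (Sum.inr j)) = 0)
    (hef : ∀ i j, B (b (Sum.inl i)) (b (Sum.inr j)) = A i j) (hAD : A.Equivalent D) :
    ∃ c : Module.Basis (ι ⊕ ι) R M,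
      Submodule.span R (Set.range fun i => c (Sum.inl i)) =
        Submodule.span R (Set.range fun i => b (Sum.inl i)) ∧
      Submodule.span R (Set.range fun i => c (Sum.inr i)) =
        Submodule.span R (Set.range fun i => b (Sum.inr i)) ∧
      ∀ s t, B (c s) (c t) = fromBlocks 0 D (-Dᵀ) 0 s t := by
  obtain ⟨P, Q, hP, hQ, rfl⟩ := hAD
  have hQ' : IsUnit Qᵀ.det := by rwa [det_transpose]
  obtain ⟨c, hc⟩ := b.exists_basis_sumElim
    ((b.linearIndependent.comp _ Sum.inl_injective).sum_smul_of_isUnit_det hP)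
    ((b.linearIndependent.comp _ Sum.inr_injective).sum_smul_of_isUnit_det hQ')
    (span_range_sum_smul_of_isUnit_det _ hP) (span_range_sum_smul_of_isUnit_det _ hQ')
  refine ⟨c, ?_, ?_, ?_⟩
  · simpa [hc] using span_range_sum_smul_of_isUnit_det _ hP
  · simpa [hc] using span_range_sum_smul_of_isUnit_det _ hQ'
  have hef' : ∀ i j, B (c (Sum.inl i)) (c (Sum.inr j)) = (P * A * Q) i j := fun i j => by
    rw [hc, Sum.elim_inl, Sum.elim_inr, LinearMap.apply_sum_smul_sum_smul, transpose_transpose,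
      show of (fun k l => B ((b ∘ Sum.inl) k) ((b ∘ Sum.inr) l)) = A from Matrix.ext hef]
  rintro (i | i) (j | j)
  · simp [hc, hee]
  · exact hef' i j
  · rw [fromBlocks_apply₂₁, Matrix.neg_apply, transpose_apply, ← hef']
    exact (halt.neg_eq _ _).symm
  · simp [hc, hff]

end Lattice

theorem LinearMap.BilinForm.exists_basis_apply_eq_fromBlocks_of_level {R Λ ι : Type*} [CommRing R]
    [IsDomain R] [IsPrincipalIdealRing R] [AddCommGroup Λ] [Module R Λ] [Fintype ι]
    [DecidableEq ι] {B : LinearMap.BilinForm R Λ} (halt : B.IsAlt) {N : R} (hN : Squarefree N)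
    (hlevel : ∀ φ : Λ →ₗ[R] R, ∃ v : Λ, ∀ x, N * φ x = B v x)
    (b : Module.Basis (ι ⊕ ι) R Λ) {A : Matrix ι ι R}
    (hee : ∀ i j, B (b (Sum.inl i)) (b (Sum.inl j)) = 0)
    (hff : ∀ i j, B (b (Sum.inr i)) (b (Sum.inr j)) = 0)
    (hef : ∀ i j, B (b (Sum.inl i)) (b (Sum.inr j)) = A i j) {d : ι → R}
    (hd : ∀ i, d i ∣ N) (hdA : Associated (∏ i, d i) A.det) :
    ∃ c : Module.Basis (ι ⊕ ι) R Λ,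
      Submodule.span R (Set.range fun i => c (Sum.inl i)) =
        Submodule.span R (Set.range fun i => b (Sum.inl i)) ∧
      Submodule.span R (Set.range fun i => c (Sum.inr i)) =
        Submodule.span R (Set.range fun i => b (Sum.inr i)) ∧
      ∀ s t, B (c s) (c t) = fromBlocks 0 (diagonal d) (-(diagonal d)ᵀ) 0 s t := by
  obtain ⟨C, hCA⟩ := exists_mul_eq_smul_one_of_level hlevel b hff hef
  exact exists_basis_apply_eq_fromBlocks halt b hee hff hef
    (equivalent_diagonal_of_mul_eq_smul_one hN hCA hd hdA)

theorem stmt_3_general (R : Type*) [CommRing R] [IsDomain R] [IsPrincipalIdealRing R]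
    (Λ : Type*) [AddCommGroup Λ] [Module R Λ]
    (m : ℕ) (B : LinearMap.BilinForm R Λ)
    (halt : ∀ x, B x x = 0)
    (N : R) (hNsf : Squarefree N)
    (hlevel : ∀ φ : Λ →ₗ[R] R, ∃ v : Λ, ∀ x, N * φ x = B v x)
    (b : Module.Basis (Fin m ⊕ Fin m) R Λ) (A : Matrix (Fin m) (Fin m) R)
    (hee : ∀ i j, B (b (Sum.inl i)) (b (Sum.inl j)) = 0)
    (hff : ∀ i j, B (b (Sum.inr i)) (b (Sum.inr j)) = 0)
    (hef : ∀ i j, B (b (Sum.inl i)) (b (Sum.inr j)) = A i j)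
    (dt : Fin m → R) (hdtN : ∀ i, dt i ∣ N)
    (hdtD : ∃ u : Rˣ, (∏ i, dt i) = (u : R) * A.det) :
    (∃ (et ft : Fin m → Λ),
      LinearIndependent R et ∧
      Submodule.span R (Set.range et) =
        Submodule.span R (Set.range fun i => b (Sum.inl i)) ∧
      LinearIndependent R ft ∧
      Submodule.span R (Set.range ft) =
        Submodule.span R (Set.range fun i => b (Sum.inr i)) ∧
      (∀ i j, B (et i) (ft j) = if i = j then dt i else 0)) ∧
    -- in particular: any second lattice of the same kind with the same determinant
    -- class is isometric to `Λ`
    (∀ (Λ₂ : Type) (_ : AddCommGroup Λ₂), ∀ (_ : Module R Λ₂),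
      ∀ (B₂ : LinearMap.BilinForm R Λ₂),
      (∀ x, B₂ x x = 0) →
      (∀ φ : Λ₂ →ₗ[R] R, ∃ v : Λ₂, ∀ x, N * φ x = B₂ v x) →
      ∀ (b₂ : Module.Basis (Fin m ⊕ Fin m) R Λ₂) (A₂ : Matrix (Fin m) (Fin m) R),
      (∀ i j, B₂ (b₂ (Sum.inl i)) (b₂ (Sum.inl j)) = 0) →
      (∀ i j, B₂ (b₂ (Sum.inr i)) (b₂ (Sum.inr j)) = 0) →
      (∀ i j, B₂ (b₂ (Sum.inl i)) (b₂ (Sum.inr j)) = A₂ i j) →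
      (∃ u : Rˣ, A.det = (u : R) * A₂.det) →
      ∃ φ : Λ ≃ₗ[R] Λ₂, ∀ x y, B₂ (φ x) (φ y) = B x y) := by
  have hdA : Associated (∏ i, dt i) A.det := by
    obtain ⟨u, hu⟩ := hdtD
    exact ⟨u⁻¹, by rw [hu, mul_comm, ← mul_assoc, Units.inv_mul, one_mul]⟩
  obtain ⟨c, hcM, hcM', hc⟩ :=
    B.exists_basis_apply_eq_fromBlocks_of_level halt hNsf hlevel b hee hff hef hdtN hdA
  refine ⟨⟨fun i => c (Sum.inl i), fun i => c (Sum.inr i),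
    c.linearIndependent.comp _ Sum.inl_injective, hcM,
    c.linearIndependent.comp _ Sum.inr_injective, hcM',
    fun i j => by simpa [diagonal_apply] using hc (Sum.inl i) (Sum.inr j)⟩, ?_⟩
  rintro Λ₂ _ _ B₂ halt₂ hlevel₂ b₂ A₂ hee₂ hff₂ hef₂ ⟨w, hw⟩
  have hdA₂ : Associated (∏ i, dt i) A₂.det := hdA.trans (Associated.symm ⟨w, by rw [hw, mul_comm]⟩)
  obtain ⟨c₂, -, -, hc₂⟩ :=
    B₂.exists_basis_apply_eq_fromBlocks_of_level halt₂ hNsf hlevel₂ b₂ hee₂ hff₂ hef₂ hdtN hdA₂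
  exact LinearMap.BilinForm.exists_linearEquiv_of_basis_apply_eq c c₂ fun s t => by
    rw [hc, hc₂]

/-- If a lattice of square-free level `N` has a basis splitting it into two
totally isotropic rank-`m` summands `M, M'` with pairing matrix `A` of determinant `D`
(up to units), then for any divisors `d̃_1,…,d̃_m` of `N` whose product is `D` up to a
unit, `M` and `M'` admit bases `ẽ, f̃` with `⟨ẽ i, f̃ j⟩ = d̃ i δ_{ij}`.  In particular
the isometry class of `(Λ, B)` is determined (for fixed `m` and `N`) by the class
`D·R^×` of the determinant. -/
theorem stmt_3 (R : Type*) [CommRing R] [IsDomain R] [IsPrincipalIdealRing R]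
    (Λ : Type*) [AddCommGroup Λ] [Module R Λ] [Module.Free R Λ] [Module.Finite R Λ]
    (m : ℕ) (B : LinearMap.BilinForm R Λ)
    (halt : ∀ x, B x x = 0)
    (N : R) (hN0 : N ≠ 0) (hNsf : Squarefree N)
    (hlevel : ∀ φ : Λ →ₗ[R] R, ∃ v : Λ, ∀ x, N * φ x = B v x)
    (b : Module.Basis (Fin m ⊕ Fin m) R Λ) (A : Matrix (Fin m) (Fin m) R)
    (hee : ∀ i j, B (b (Sum.inl i)) (b (Sum.inl j)) = 0)
    (hff : ∀ i j, B (b (Sum.inr i)) (b (Sum.inr j)) = 0)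
    (hef : ∀ i j, B (b (Sum.inl i)) (b (Sum.inr j)) = A i j)
    (hAdet : A.det ≠ 0)
    (dt : Fin m → R) (hdtN : ∀ i, dt i ∣ N)
    (hdtD : ∃ u : Rˣ, (∏ i, dt i) = (u : R) * A.det) :
    (∃ (et ft : Fin m → Λ),
      LinearIndependent R et ∧
      Submodule.span R (Set.range et) =
        Submodule.span R (Set.range fun i => b (Sum.inl i)) ∧
      LinearIndependent R ft ∧
      Submodule.span R (Set.range ft) =
        Submodule.span R (Set.range fun i => b (Sum.inr i)) ∧
      (∀ i j, B (et i) (ft j) = if i = j then dt i else 0)) ∧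
    -- in particular: any second lattice of the same kind with the same determinant
    -- class is isometric to `Λ`
    (∀ (Λ₂ : Type) (_ : AddCommGroup Λ₂), ∀ (_ : Module R Λ₂),
      ∀ (B₂ : LinearMap.BilinForm R Λ₂),
      (∀ x, B₂ x x = 0) →
      (∀ φ : Λ₂ →ₗ[R] R, ∃ v : Λ₂, ∀ x, N * φ x = B₂ v x) →
      ∀ (b₂ : Module.Basis (Fin m ⊕ Fin m) R Λ₂) (A₂ : Matrix (Fin m) (Fin m) R),
      (∀ i j, B₂ (b₂ (Sum.inl i)) (b₂ (Sum.inl j)) = 0) →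
      (∀ i j, B₂ (b₂ (Sum.inr i)) (b₂ (Sum.inr j)) = 0) →
      (∀ i j, B₂ (b₂ (Sum.inl i)) (b₂ (Sum.inr j)) = A₂ i j) →
      (∃ u : Rˣ, A.det = (u : R) * A₂.det) →
      ∃ φ : Λ ≃ₗ[R] Λ₂, ∀ x y, B₂ (φ x) (φ y) = B x y) :=
  stmt_3_general R Λ m B halt N hNsf hlevel b A hee hff hef dt hdtN hdtD
end

section
/- Let R be a complete discrete valuation ring with prime p, Λ a lattice of level dividing p on a 2n-dimensional symplectic space over Frac(R) with a unimodular and b p-modular hyperbolic planes. With T = diag(1_{a'}, p·1_{b'}) and T' = diag(1_a, p·1_b), and B = B(r_−, r_+, μ_1,…,μ_n) the monomial matrix of the double coset representatives (entries p^{μ_i} in the positions determined by r_−, r_+ with 1 ≤ μ_1 ≤ … ≤ μ_{r_−} and the other μ's ≥ 0 nondecreasing in their blocks), the matrix T^{−1}·ᵗB·T' has integral entries. -/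
/-- Column position of the unique nonzero entry in row `j` (0-indexed) of the
monomial double-coset representative matrix `B(r₋, r₊, μ)`. -/
def colIdx (a a' rm rp : ℕ) (j : ℕ) : ℕ :=
  if j < rm then a' + j
  else if j < a then rp + (j - rm)
  else if j < a + rp then j - a
  else j

/-- The monomial matrix `B(r₋, r₊, μ₁,…,μ_n)` of the local paramodular Hecke double
coset representatives: row `j` has the single nonzero entry `p^{μ j}` in column
`colIdx a a' r₋ r₊ j`. -/
noncomputable def Bmat (p : ℕ) (n a a' rm rp : ℕ) (μ : ℕ → ℕ) :
    Matrix (Fin n) (Fin n) ℚ :=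
  Matrix.of fun j i => if (i : ℕ) = colIdx a a' rm rp (j : ℕ) then (p : ℚ) ^ μ (j : ℕ) else 0

/-- With `T = diag(1_{a'}, p·1_{b'})` and `T' = diag(1_a, p·1_b)`, the
matrix `T⁻¹ · ᵗB(r₋,r₊,μ) · T'` has integral entries. -/
theorem stmt_18 (p : ℕ) (hp : p.Prime)
    (n a b a' b' rm rp : ℕ)
    (hab : a + b = n) (ha'b' : a' + b' = n)
    (haa' : a + rp = a' + rm) (hbb' : b + rm = b' + rp)
    (hrma : rm ≤ a) (hrmb' : rm ≤ b') (hrpa' : rp ≤ a') (hrpb : rp ≤ b)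
    (μ : ℕ → ℕ)
    (hμ1 : ∀ j < rm, 1 ≤ μ j)
    (hmono : ∀ i j : ℕ, i ≤ j → j < n →
      ((j < rm) ∨ (rm ≤ i ∧ j < a) ∨ (a ≤ i ∧ j < a + rp) ∨ (a + rp ≤ i)) →
      μ i ≤ μ j) :
    ∃ M : Matrix (Fin n) (Fin n) ℤ,
      (Matrix.diagonal fun i : Fin n => (if (i : ℕ) < a' then (1 : ℚ) else p)⁻¹)
        * (Bmat p n a a' rm rp μ).transpose
        * (Matrix.diagonal fun j : Fin n => if (j : ℕ) < a then (1 : ℚ) else p)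
      = M.map (Int.cast : ℤ → ℚ) := by
  have hp0 : (p : ℚ) ≠ 0 := by exact_mod_cast hp.ne_zero
  refine ⟨Matrix.of fun i j => if (i : ℕ) = colIdx a a' rm rp (j : ℕ)
      then (p : ℤ) ^ (μ (j:ℕ) + (if (j:ℕ) < a then 0 else 1) - (if (i:ℕ) < a' then 0 else 1))
      else 0, ?_⟩
  ext i j
  rw [Matrix.mul_diagonal, Matrix.diagonal_mul]
  simp only [Matrix.map_apply, Matrix.of_apply, Matrix.transpose_apply, Bmat]
  by_cases hcol : (i : ℕ) = colIdx a a' rm rp (j : ℕ)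
  · rw [if_pos hcol, if_pos hcol]
    by_cases hia : (i : ℕ) < a' <;> by_cases hja : (j : ℕ) < a <;>
      simp only [if_pos, if_neg, hia, hja, if_true, if_false] <;>
      push_cast
    · simp
    · rw [pow_succ]; ring
    · have hjrm : (j : ℕ) < rm := by
        by_contra h
        push_neg at h
        have : colIdx a a' rm rp (j:ℕ) = rp + ((j:ℕ) - rm) := by
          unfold colIdx; rw [if_neg (by omega), if_pos hja]
        omega
      have hμ : 1 ≤ μ (j:ℕ) := hμ1 _ hjrm
      rw [Nat.add_zero, mul_one, inv_mul_eq_div, div_eq_iff hp0, ← pow_succ,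
        Nat.sub_add_cancel hμ]
    · field_simp
  · simp [hcol]
end

section
/- In the case a = a', b = b' (so r := r_− = r_+), conjugation by T (i.e. the map B ↦ T^{−1}·ᵗB·T with T = diag(1_a, p·1_b)) sends the representative matrix B(r,r,μ_1,…,μ_n) to B(r,r, μ_{a+1}+1,…,μ_{a+r}+1, μ_{r+1},…,μ_a, μ_1−1,…,μ_r−1, μ_{a+r+1},…,μ_n); in particular this operation permutes the set of representative matrices B with fixed total exponent sum μ_1+…+μ_n, and hence the element T(p^j) of the Hecke algebra (the sum of double cosets with μ_1+…+μ_n = j) is invariant under the involution Γ α Γ ↦ Γ α^{−1} Γ. -/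
/-- In the case `a = a'`, `b = b'`, `r = r₋ = r₊`, conjugation
`B ↦ T⁻¹·ᵗB·T` with `T = diag(1_a, p·1_b)` sends `B(r,r,μ₁,…,μ_n)` to
`B(r,r, μ_{a+1}+1,…,μ_{a+r}+1, μ_{r+1},…,μ_a, μ_1−1,…,μ_r−1, μ_{a+r+1},…,μ_n)`.
In particular the new exponents `ν` satisfy the same constraints and have the same
total sum `μ_1+…+μ_n`, so this operation permutes the set of representative matrices
with fixed exponent sum, whence the Hecke element `T(p^j)` is invariant under the
involution `Γ α Γ ↦ Γ α⁻¹ Γ`. -/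
theorem stmt_19 (p : ℕ) (hp : p.Prime)
    (n a b r : ℕ)
    (hab : a + b = n) (hra : r ≤ a) (hrb : r ≤ b)
    (μ : ℕ → ℕ)
    (hμ1 : ∀ j < r, 1 ≤ μ j)
    (hmono : ∀ i j : ℕ, i ≤ j → j < n →
      ((j < r) ∨ (r ≤ i ∧ j < a) ∨ (a ≤ i ∧ j < a + r) ∨ (a + r ≤ i)) →
      μ i ≤ μ j)
    (ν : ℕ → ℕ)
    (hν : ∀ j, ν j = if j < r then μ (a + j) + 1
      else if j < a then μ j
      else if j < a + r then μ (j - a) - 1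
      else μ j) :
    ((Matrix.diagonal fun i : Fin n => (if (i : ℕ) < a then (1 : ℚ) else p)⁻¹)
        * (Bmat p n a a r r μ).transpose
        * (Matrix.diagonal fun j : Fin n => if (j : ℕ) < a then (1 : ℚ) else p)
      = Bmat p n a a r r ν) ∧
    (∀ j < r, 1 ≤ ν j) ∧
    (∀ i j : ℕ, i ≤ j → j < n →
      ((j < r) ∨ (r ≤ i ∧ j < a) ∨ (a ≤ i ∧ j < a + r) ∨ (a + r ≤ i)) →
      ν i ≤ ν j) ∧
    (∑ j ∈ Finset.range n, ν j = ∑ j ∈ Finset.range n, μ j) := by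
  have hp0 : (p : ℚ) ≠ 0 := Nat.cast_ne_zero.mpr hp.pos.ne'
  have hpow : ∀ m : ℕ, 1 ≤ m → (p : ℚ)⁻¹ * ((p : ℚ) ^ m) = (p : ℚ) ^ (m - 1) := by
    intro m hm
    obtain ⟨k, rfl⟩ : ∃ k, m = k + 1 := ⟨m - 1, by omega⟩
    rw [Nat.add_sub_cancel, pow_succ, ← mul_assoc]
    field_simp
  refine ⟨?_, ?_, ?_, ?_⟩
  · ext j i
    rw [Matrix.mul_diagonal, Matrix.diagonal_mul, Matrix.transpose_apply]
    simp only [Bmat, Matrix.of_apply]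
    have hjn : (j : ℕ) < n := j.isLt
    have hin : (i : ℕ) < n := i.isLt
    by_cases h : (j : ℕ) = colIdx a a r r (i : ℕ)
    · have hi' : (i : ℕ) = colIdx a a r r (j : ℕ) := by
        simp only [colIdx] at h ⊢; split_ifs at h ⊢ <;> omega
      rw [if_pos h, if_pos hi', hν]
      have hcase : (i : ℕ) < r ∨ (r ≤ (i : ℕ) ∧ (i : ℕ) < a) ∨
          (a ≤ (i : ℕ) ∧ (i : ℕ) < a + r) ∨ a + r ≤ (i : ℕ) := by omega
      have hj' : (j : ℕ) = colIdx a a r r (i : ℕ) := h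
      simp only [colIdx] at hj'
      rcases hcase with hc | hc | hc | hc
      · -- i < r : j = a + i
        have hj : (j : ℕ) = a + (i : ℕ) := by split_ifs at hj' <;> omega
        rw [if_neg (by omega : ¬ (j : ℕ) < a), if_pos (by omega : (i : ℕ) < a),
          if_neg (by omega : ¬ (j : ℕ) < r), if_neg (by omega : ¬ (j : ℕ) < a),
          if_pos (by omega : (j : ℕ) < a + r),
          show (j : ℕ) - a = (i : ℕ) by omega]
        rw [mul_one]
        exact hpow _ (hμ1 _ hc)
      · -- r ≤ i < a : j = i
        have hj : (j : ℕ) = (i : ℕ) := by split_ifs at hj' <;> omega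
        rw [if_pos (by omega : (j : ℕ) < a), if_pos (by omega : (i : ℕ) < a),
          if_neg (by omega : ¬ (j : ℕ) < r), if_pos (by omega : (j : ℕ) < a), hj]
        rw [inv_one, one_mul, mul_one]
      · -- a ≤ i < a + r : j = i - a
        have hj : (j : ℕ) = (i : ℕ) - a := by split_ifs at hj' <;> omega
        rw [if_pos (by omega : (j : ℕ) < a), if_neg (by omega : ¬ (i : ℕ) < a),
          if_pos (by omega : (j : ℕ) < r), show a + (j : ℕ) = (i : ℕ) by omega]
        rw [inv_one, one_mul, pow_succ]
      · -- a + r ≤ i : j = i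
        have hj : (j : ℕ) = (i : ℕ) := by split_ifs at hj' <;> omega
        rw [if_neg (by omega : ¬ (j : ℕ) < a), if_neg (by omega : ¬ (i : ℕ) < a),
          if_neg (by omega : ¬ (j : ℕ) < r), if_neg (by omega : ¬ (j : ℕ) < a),
          if_neg (by omega : ¬ (j : ℕ) < a + r), hj]
        field_simp
    · have hi' : ¬ (i : ℕ) = colIdx a a r r (j : ℕ) := by
        intro hcon
        apply h
        simp only [colIdx] at hcon ⊢; split_ifs at hcon ⊢ <;> omega
      rw [if_neg h, if_neg hi']
      simp
  · intro j hj
    rw [hν, if_pos hj]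
    omega
  · intro i j hij hjn hcase
    rcases hcase with hc | hc | hc | hc
    · rw [hν i, hν j, if_pos (by omega : i < r), if_pos hc]
      have := hmono (a + i) (a + j) (by omega) (by omega)
        (Or.inr (Or.inr (Or.inl ⟨by omega, by omega⟩)))
      omega
    · rw [hν i, hν j, if_neg (by omega : ¬ i < r), if_pos (by omega : i < a),
        if_neg (by omega : ¬ j < r), if_pos hc.2]
      exact hmono i j hij (by omega) (Or.inr (Or.inl ⟨by omega, hc.2⟩))
    · rw [hν i, hν j, if_neg (by omega : ¬ i < r), if_neg (by omega : ¬ i < a),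
        if_pos (by omega : i < a + r), if_neg (by omega : ¬ j < r),
        if_neg (by omega : ¬ j < a), if_pos hc.2]
      have := hmono (i - a) (j - a) (by omega) (by omega) (Or.inl (by omega))
      omega
    · rw [hν i, hν j, if_neg (by omega : ¬ i < r), if_neg (by omega : ¬ i < a),
        if_neg (by omega : ¬ i < a + r), if_neg (by omega : ¬ j < r),
        if_neg (by omega : ¬ j < a), if_neg (by omega : ¬ j < a + r)]
      exact hmono i j hij hjn (Or.inr (Or.inr (Or.inr hc)))
  · have split : ∀ f : ℕ → ℕ, ∑ j ∈ Finset.range n, f j =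
        ∑ j ∈ Finset.Ico 0 r, f j + ∑ j ∈ Finset.Ico r a, f j +
        ∑ j ∈ Finset.Ico a (a + r), f j + ∑ j ∈ Finset.Ico (a + r) n, f j := by
      intro f
      rw [Finset.range_eq_Ico,
        ← Finset.sum_Ico_consecutive f (by omega : (0 : ℕ) ≤ a + r) (by omega : a + r ≤ n),
        ← Finset.sum_Ico_consecutive f (by omega : (0 : ℕ) ≤ a) (by omega : a ≤ a + r),
        ← Finset.sum_Ico_consecutive f (by omega : (0 : ℕ) ≤ r) (by omega : r ≤ a)]
    rw [split ν, split μ]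
    have e1 : ∑ j ∈ Finset.Ico 0 r, ν j = ∑ j ∈ Finset.range r, (μ (a + j) + 1) := by
      rw [← Finset.range_eq_Ico]
      refine Finset.sum_congr rfl fun j hj => ?_
      rw [hν, if_pos (Finset.mem_range.mp hj)]
    have e2 : ∑ j ∈ Finset.Ico r a, ν j = ∑ j ∈ Finset.Ico r a, μ j := by
      refine Finset.sum_congr rfl fun j hj => ?_
      obtain ⟨h1, h2⟩ := Finset.mem_Ico.mp hj
      rw [hν, if_neg (by omega), if_pos h2]
    have e3 : ∑ j ∈ Finset.Ico a (a + r), ν j = ∑ j ∈ Finset.range r, (μ j - 1) := by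
      rw [Finset.sum_Ico_eq_sum_range]
      simp only [Nat.add_sub_cancel_left]
      refine Finset.sum_congr rfl fun j hj => ?_
      have hjr := Finset.mem_range.mp hj
      rw [hν, if_neg (by omega), if_neg (by omega), if_pos (by omega),
        Nat.add_sub_cancel_left]
    have e4 : ∑ j ∈ Finset.Ico (a + r) n, ν j = ∑ j ∈ Finset.Ico (a + r) n, μ j := by
      refine Finset.sum_congr rfl fun j hj => ?_
      obtain ⟨h1, h2⟩ := Finset.mem_Ico.mp hj
      rw [hν, if_neg (by omega), if_neg (by omega), if_neg (by omega)]
    have e5 : ∑ j ∈ Finset.Ico a (a + r), μ j = ∑ j ∈ Finset.range r, μ (a + j) := by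
      rw [Finset.sum_Ico_eq_sum_range]
      simp
    have e6 : ∑ j ∈ Finset.Ico 0 r, μ j = ∑ j ∈ Finset.range r, μ j := by
      rw [Finset.range_eq_Ico]
    have key : ∑ j ∈ Finset.range r, (μ (a + j) + 1) + ∑ j ∈ Finset.range r, (μ j - 1) =
        ∑ j ∈ Finset.range r, μ j + ∑ j ∈ Finset.range r, μ (a + j) := by
      rw [← Finset.sum_add_distrib, ← Finset.sum_add_distrib]
      refine Finset.sum_congr rfl fun j hj => ?_
      have := hμ1 j (Finset.mem_range.mp hj)
      omega
    rw [e1, e2, e3, e4, e5, e6]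
    omega
end
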